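/- Let $\bar{A}_n$, $\bar{B}_n$ be matrices defining a closed-loop linear time-varying system $\bar{x}_{n+1} = \bar{A}_n \bar{x}_n + \bar{B}_n e_n + \text{noise}$, where the watermark vectors $e_n$ are mutually independent, zero-mean, with block-diagonal covariance whose $i$-th block $\Sigma_{e_i}$ is positive definite, and $e_n$ is independent of the state history up to time $n$ and of all noise. Fix indices $i,j$ and a delay $\rho \in \mathbb{N}$. If the matrix product $[W C_j \; 0] \bar{A}_{n-1} \cdots \bar{A}_{n-\rho} \bar{B}_{n-\rho-1} E_i^T$ is nonzero, where $E_i$ selects the block of $e$ corresponding to agent $i$, then the cross-correlation $\mathbb{E}[W C_j x_n e_{i,n-\rho-1}^T]$ equals this matrix product times $\Sigma_{e_i}$ and is hence nonzero. -/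

import Mathlib

/-!
Let `k = n - ρ - 1`. The recursion is linear, so `𝔼[x_N e_kᵀ]` obeys the same recursion as the
state, driven by `𝔼[e_N e_kᵀ]` and `𝔼[ν_N e_kᵀ]`. Independence and zero mean of the watermark
kill every driving term except its own covariance `Σ_e` at `N = k`, and `x_k` is independent
of `e_k`; hence `𝔼[x_n e_kᵀ] = Ā_{n-1} ⋯ Ā_{k+1} B̄_k Σ_e`. Multiplying by `[W C_j 0]` and
`E_iᵀ` and using `Σ_e E_iᵀ = E_iᵀ Σ_{e_i}` gives the formula, which is nonzero because
`Σ_{e_i}` is invertible.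
-/

open MeasureTheory ProbabilityTheory Matrix

/-- The state transition matrix `transMat A k n = A (n-1) * ⋯ * A k` (and `1` if `n ≤ k`). -/
def transMat {ι : Type*} [Fintype ι] [DecidableEq ι]
    (A : ℕ → Matrix ι ι ℝ) (k : ℕ) : ℕ → Matrix ι ι ℝ
  | 0 => 1
  | n + 1 => if k ≤ n then A n * transMat A k n else 1

section transMat

variable {ι : Type*} [Fintype ι] [DecidableEq ι] (A : ℕ → Matrix ι ι ℝ)

theorem transMat_self (k : ℕ) : transMat A k k = 1 := by
  cases k <;> simp [transMat]

theorem transMat_succ_of_le {k n : ℕ} (h : k ≤ n) :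
    transMat A k (n + 1) = A n * transMat A k n :=
  if_pos h

end transMat

section crossCorr

variable {Ω ι κ ι' : Type*} [MeasurableSpace Ω] {μ : Measure Ω}

/-- `𝔼[X Yᵀ]`. -/
noncomputable def crossCorr (μ : Measure Ω) (X : Ω → ι → ℝ) (Y : Ω → κ → ℝ) :
    Matrix ι κ ℝ :=
  Matrix.of fun a b => ∫ ω, X ω a * Y ω b ∂μ

theorem crossCorr_transpose (X : Ω → ι → ℝ) (Y : Ω → κ → ℝ) :
    (crossCorr μ X Y)ᵀ = crossCorr μ Y X := by
  ext a b
  simp only [crossCorr, transpose_apply, of_apply, mul_comm]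

theorem crossCorr_add_left {X₁ X₂ : Ω → ι → ℝ} {Y : Ω → κ → ℝ}
    (h₁ : ∀ a b, Integrable (fun ω => X₁ ω a * Y ω b) μ)
    (h₂ : ∀ a b, Integrable (fun ω => X₂ ω a * Y ω b) μ) :
    crossCorr μ (X₁ + X₂) Y = crossCorr μ X₁ Y + crossCorr μ X₂ Y := by
  ext a b
  simp only [crossCorr, of_apply, Matrix.add_apply, Pi.add_apply, add_mul]
  exact integral_add (h₁ a b) (h₂ a b)

theorem crossCorr_mulVec_left [Fintype ι] (A : Matrix ι' ι ℝ) {X : Ω → ι → ℝ}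
    {Y : Ω → κ → ℝ} (hXY : ∀ a b, Integrable (fun ω => X ω a * Y ω b) μ) :
    crossCorr μ (fun ω => A *ᵥ X ω) Y = A * crossCorr μ X Y := by
  ext a b
  simp only [crossCorr, of_apply, mul_apply, mulVec, dotProduct, Finset.sum_mul, mul_assoc]
  rw [integral_finsetSum _ fun c _ => (hXY c b).const_mul _]
  simp only [integral_const_mul]

theorem crossCorr_mulVec_right [Fintype κ] (B : Matrix ι' κ ℝ) {X : Ω → ι → ℝ}
    {Y : Ω → κ → ℝ} (hXY : ∀ a b, Integrable (fun ω => X ω a * Y ω b) μ) :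
    crossCorr μ X (fun ω => B *ᵥ Y ω) = crossCorr μ X Y * Bᵀ := by
  have hYX : ∀ b a, Integrable (fun ω => Y ω b * X ω a) μ := fun b a => by
    simpa only [mul_comm] using hXY a b
  rw [← crossCorr_transpose, crossCorr_mulVec_left B hYX, transpose_mul, crossCorr_transpose]

theorem crossCorr_eq_zero_of_indepFun {X : Ω → ι → ℝ} {Y : Ω → κ → ℝ} (hXY : IndepFun X Y μ)
    (hX : ∀ a, AEStronglyMeasurable (fun ω => X ω a) μ)
    (hY : ∀ b, AEStronglyMeasurable (fun ω => Y ω b) μ) (hY₀ : ∀ b, ∫ ω, Y ω b ∂μ = 0) :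
    crossCorr μ X Y = 0 := by
  ext a b
  have hab : IndepFun (fun ω => X ω a) (fun ω => Y ω b) μ :=
    hXY.comp (measurable_pi_apply a) (measurable_pi_apply b)
  simp only [crossCorr, of_apply, Matrix.zero_apply,
    hab.integral_fun_mul_eq_mul_integral (hX a) (hY b), hY₀, mul_zero]

theorem integrable_mul_of_memLp_two {X : Ω → ι → ℝ} {Y : Ω → κ → ℝ}
    (hX : ∀ a, MemLp (fun ω => X ω a) 2 μ) (hY : ∀ b, MemLp (fun ω => Y ω b) 2 μ) :
    ∀ a b, Integrable (fun ω => X ω a * Y ω b) μ :=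
  fun a b => (hX a).integrable_mul (hY b)

theorem memLp_mulVec [Fintype ι] {p : ENNReal} (A : Matrix ι' ι ℝ) {X : Ω → ι → ℝ}
    (hX : ∀ a, MemLp (fun ω => X ω a) p μ) : ∀ a, MemLp (fun ω => (A *ᵥ X ω) a) p μ :=
  fun a => memLp_finsetSum _ fun c _ => (hX c).const_mul (A a c)

end crossCorr

section LTV

variable {Ω ι κ : Type*} [MeasurableSpace Ω] {μ : Measure Ω} [Fintype ι] [Fintype κ]
  {A : ℕ → Matrix ι ι ℝ} {B : ℕ → Matrix ι κ ℝ} {x : ℕ → Ω → ι → ℝ}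
  {e : ℕ → Ω → κ → ℝ} {ν : ℕ → Ω → ι → ℝ}

theorem memLp_state [IsFiniteMeasure μ]
    (hrec : ∀ n ω, x (n + 1) ω = A n *ᵥ x n ω + B n *ᵥ e n ω + ν n ω)
    (x₀ : ι → ℝ) (hx₀ : ∀ ω, x 0 ω = x₀)
    (he : ∀ n a, MemLp (fun ω => e n ω a) 2 μ) (hν : ∀ n a, MemLp (fun ω => ν n ω a) 2 μ) :
    ∀ n a, MemLp (fun ω => x n ω a) 2 μ := by
  intro n
  induction n with
  | zero => simp only [hx₀, memLp_const, implies_true]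
  | succ n ih =>
    intro a
    simp only [hrec, Pi.add_apply]
    exact ((memLp_mulVec (A n) ih a).add (memLp_mulVec (B n) (he n) a)).add (hν n a)

theorem crossCorr_state_succ {κ' : Type*} {Y : Ω → κ' → ℝ} {N : ℕ}
    (hrec : ∀ n ω, x (n + 1) ω = A n *ᵥ x n ω + B n *ᵥ e n ω + ν n ω)
    (hx : ∀ a, MemLp (fun ω => x N ω a) 2 μ) (he : ∀ a, MemLp (fun ω => e N ω a) 2 μ)
    (hν : ∀ a, MemLp (fun ω => ν N ω a) 2 μ) (hY : ∀ b, MemLp (fun ω => Y ω b) 2 μ) :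
    crossCorr μ (x (N + 1)) Y =
      A N * crossCorr μ (x N) Y + B N * crossCorr μ (e N) Y + crossCorr μ (ν N) Y := by
  have hsplit : x (N + 1) = (fun ω => A N *ᵥ x N ω) + (fun ω => B N *ᵥ e N ω) + ν N :=
    funext (hrec N)
  have hAx := memLp_mulVec (A N) hx
  have hBe := memLp_mulVec (B N) he
  rw [hsplit, crossCorr_add_left (X₁ := (fun ω => A N *ᵥ x N ω) + fun ω => B N *ᵥ e N ω)
      (integrable_mul_of_memLp_two (fun a => (hAx a).add (hBe a)) hY)
      (integrable_mul_of_memLp_two hν hY),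
    crossCorr_add_left (integrable_mul_of_memLp_two hAx hY) (integrable_mul_of_memLp_two hBe hY),
    crossCorr_mulVec_left _ (integrable_mul_of_memLp_two hx hY),
    crossCorr_mulVec_left _ (integrable_mul_of_memLp_two he hY)]

theorem crossCorr_state_watermark [DecidableEq ι]
    (hrec : ∀ n ω, x (n + 1) ω = A n *ᵥ x n ω + B n *ᵥ e n ω + ν n ω)
    (hx : ∀ n a, MemLp (fun ω => x n ω a) 2 μ) (he : ∀ n a, MemLp (fun ω => e n ω a) 2 μ)
    (hν : ∀ n a, MemLp (fun ω => ν n ω a) 2 μ) {k : ℕ} (he₀ : ∀ b, ∫ ω, e k ω b ∂μ = 0)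
    (hee : ∀ N, N ≠ k → IndepFun (e N) (e k) μ) (hνe : ∀ N, IndepFun (ν N) (e k) μ)
    (hxe : IndepFun (x k) (e k) μ) {n : ℕ} (hkn : k < n) :
    crossCorr μ (x n) (e k) = transMat A (k + 1) n * (B k * crossCorr μ (e k) (e k)) := by
  have hek : ∀ b, AEStronglyMeasurable (fun ω => e k ω b) μ := fun b => (he k b).1
  have hνk : ∀ N, crossCorr μ (ν N) (e k) = 0 := fun N =>
    crossCorr_eq_zero_of_indepFun (hνe N) (fun a => (hν N a).1) hek he₀
  induction n, hkn using Nat.le_induction with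
  | base =>
    rw [crossCorr_state_succ hrec (hx k) (he k) (hν k) (he k),
      crossCorr_eq_zero_of_indepFun hxe (fun a => (hx k a).1) hek he₀, hνk, transMat_self,
      Matrix.mul_zero, zero_add, add_zero, Matrix.one_mul]
  | succ n hkn ih =>
    rw [crossCorr_state_succ hrec (hx n) (he n) (hν n) (he k), ih,
      crossCorr_eq_zero_of_indepFun (hee n (by omega)) (fun a => (he n a).1) hek he₀, hνk,
      transMat_succ_of_le _ hkn, Matrix.mul_zero, add_zero, add_zero, Matrix.mul_assoc]

end LTV

theorem Matrix.mul_ne_zero_of_isUnit_right {m n R : Type*} [Fintype n] [DecidableEq n]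
    [CommRing R] {M : Matrix m n R} {S : Matrix n n R} (hS : IsUnit S) (hM : M ≠ 0) :
    M * S ≠ 0 := by
  have := hS.invertible
  exact fun h => hM (mul_left_injective_of_invertible S (h.trans (Matrix.zero_mul S).symm))

theorem stmt_0_general {Ω : Type*} [MeasurableSpace Ω] (μ : Measure Ω) [IsProbabilityMeasure μ]
    {p t q qi m r : ℕ}
    (Abar : ℕ → Matrix (Fin p ⊕ Fin t) (Fin p ⊕ Fin t) ℝ)
    (Bbar : ℕ → Matrix (Fin p ⊕ Fin t) (Fin q) ℝ)
    (x : ℕ → Ω → (Fin p ⊕ Fin t) → ℝ) (e : ℕ → Ω → Fin q → ℝ)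
    (ν : ℕ → Ω → (Fin p ⊕ Fin t) → ℝ)
    (hrec : ∀ n ω, x (n + 1) ω =
      (Abar n).mulVec (x n ω) + (Bbar n).mulVec (e n ω) + ν n ω)
    (x0 : (Fin p ⊕ Fin t) → ℝ) (hx0 : ∀ ω, x 0 ω = x0)
    (hemean : ∀ n a, ∫ ω, e n ω a ∂μ = 0)
    (heL2 : ∀ n a, MemLp (fun ω => e n ω a) 2 μ)
    (hνL2 : ∀ n a, MemLp (fun ω => ν n ω a) 2 μ)
    (hiid : iIndepFun e μ)
    (hindepν : ∀ n k, IndepFun (e n) (ν k) μ)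
    (hindepx : ∀ n, IndepFun (e n) (x n) μ)
    (Se : Matrix (Fin q) (Fin q) ℝ)
    (hSe : ∀ n, (Matrix.of fun a b => ∫ ω, e n ω a * e n ω b ∂μ) = Se)
    (Sei : Matrix (Fin qi) (Fin qi) ℝ) (hSei : Sei.PosDef)
    (Ei : Matrix (Fin qi) (Fin q) ℝ) (hblock : Se * Eiᵀ = Eiᵀ * Sei)
    (W : Matrix (Fin r) (Fin m) ℝ) (Cj : Matrix (Fin m) (Fin p) ℝ)
    (n ρ : ℕ) (hn : ρ + 1 ≤ n)
    (hnz : Matrix.fromCols (W * Cj) (0 : Matrix (Fin r) (Fin t) ℝ) *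
      transMat Abar (n - ρ) n * Bbar (n - ρ - 1) * Eiᵀ ≠ 0) :
    (Matrix.of fun a b => ∫ ω,
        ((Matrix.fromCols (W * Cj) (0 : Matrix (Fin r) (Fin t) ℝ)).mulVec (x n ω)) a *
          (Ei.mulVec (e (n - ρ - 1) ω)) b ∂μ) =
      Matrix.fromCols (W * Cj) (0 : Matrix (Fin r) (Fin t) ℝ) *
        transMat Abar (n - ρ) n * Bbar (n - ρ - 1) * Eiᵀ * Sei ∧
    (Matrix.of fun a b => ∫ ω,
        ((Matrix.fromCols (W * Cj) (0 : Matrix (Fin r) (Fin t) ℝ)).mulVec (x n ω)) a *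
          (Ei.mulVec (e (n - ρ - 1) ω)) b ∂μ) ≠ 0 := by
  set F := Matrix.fromCols (W * Cj) (0 : Matrix (Fin r) (Fin t) ℝ)
  set k := n - ρ - 1
  change crossCorr μ (fun ω => F *ᵥ x n ω) (fun ω => Ei *ᵥ e k ω) = _ ∧
    crossCorr μ (fun ω => F *ᵥ x n ω) (fun ω => Ei *ᵥ e k ω) ≠ 0
  have hx := memLp_state hrec x0 hx0 heL2 hνL2
  have hcorr : crossCorr μ (x n) (e k) = transMat Abar (n - ρ) n * (Bbar k * Se) := by
    rw [show n - ρ = k + 1 by omega, ← hSe k]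
    exact crossCorr_state_watermark hrec hx heL2 hνL2 (hemean k) (fun N hN => hiid.indepFun hN)
      (fun N => (hindepν k N).symm) (hindepx k).symm (by omega)
  have hformula : crossCorr μ (fun ω => F *ᵥ x n ω) (fun ω => Ei *ᵥ e k ω) =
      F * transMat Abar (n - ρ) n * Bbar k * Eiᵀ * Sei := by
    rw [crossCorr_mulVec_right Ei
        (integrable_mul_of_memLp_two (memLp_mulVec F (hx n)) (heL2 k)),
      crossCorr_mulVec_left F (integrable_mul_of_memLp_two (hx n) (heL2 k)), hcorr]
    simp only [Matrix.mul_assoc, hblock]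
  exact ⟨hformula, hformula ▸ mul_ne_zero_of_isUnit_right hSei.isUnit hnz⟩

/-- Networked LTV dynamic watermarking correlation proposition: for the closed-loop system
`x̄ (n+1) = Ā n x̄ n + B̄ n e n + ν n` driven by mutually independent zero-mean watermarks
(independent of the state history and of all noise, with block-diagonal covariance whose
`i`-th block `Σ_{e_i}` is positive definite), if
`[W C_j  0] Ā_{n-1} ⋯ Ā_{n-ρ} B̄_{n-ρ-1} Eᵢᵀ ≠ 0`, then
`𝔼[W C_j x_n e_{i,n-ρ-1}ᵀ]` equals this product times `Σ_{e_i}` and is hence nonzero. -/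
theorem stmt_0 {Ω : Type*} [MeasurableSpace Ω] (μ : Measure Ω) [IsProbabilityMeasure μ]
    {p t q qi m r : ℕ}
    (Abar : ℕ → Matrix (Fin p ⊕ Fin t) (Fin p ⊕ Fin t) ℝ)
    (Bbar : ℕ → Matrix (Fin p ⊕ Fin t) (Fin q) ℝ)
    (x : ℕ → Ω → (Fin p ⊕ Fin t) → ℝ) (e : ℕ → Ω → Fin q → ℝ)
    (ν : ℕ → Ω → (Fin p ⊕ Fin t) → ℝ)
    (hrec : ∀ n ω, x (n + 1) ω =
      (Abar n).mulVec (x n ω) + (Bbar n).mulVec (e n ω) + ν n ω)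
    (x0 : (Fin p ⊕ Fin t) → ℝ) (hx0 : ∀ ω, x 0 ω = x0)
    (hmease : ∀ n, Measurable (e n)) (hmeasν : ∀ n, Measurable (ν n))
    (hmeasx : ∀ n, Measurable (x n))
    (hemean : ∀ n a, ∫ ω, e n ω a ∂μ = 0) (hνmean : ∀ n a, ∫ ω, ν n ω a ∂μ = 0)
    (heL2 : ∀ n a, MemLp (fun ω => e n ω a) 2 μ)
    (hνL2 : ∀ n a, MemLp (fun ω => ν n ω a) 2 μ)
    (hiid : iIndepFun e μ)
    (hindepν : ∀ n k, IndepFun (e n) (ν k) μ)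
    (hindepx : ∀ n, IndepFun (e n) (x n) μ)
    (Se : Matrix (Fin q) (Fin q) ℝ)
    (hSe : ∀ n, (Matrix.of fun a b => ∫ ω, e n ω a * e n ω b ∂μ) = Se)
    (Sei : Matrix (Fin qi) (Fin qi) ℝ) (hSei : Sei.PosDef)
    (Ei : Matrix (Fin qi) (Fin q) ℝ) (hblock : Se * Eiᵀ = Eiᵀ * Sei)
    (W : Matrix (Fin r) (Fin m) ℝ) (Cj : Matrix (Fin m) (Fin p) ℝ)
    (n ρ : ℕ) (hn : ρ + 1 ≤ n)
    (hnz : Matrix.fromCols (W * Cj) (0 : Matrix (Fin r) (Fin t) ℝ) *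
      transMat Abar (n - ρ) n * Bbar (n - ρ - 1) * Eiᵀ ≠ 0) :
    (Matrix.of fun a b => ∫ ω,
        ((Matrix.fromCols (W * Cj) (0 : Matrix (Fin r) (Fin t) ℝ)).mulVec (x n ω)) a *
          (Ei.mulVec (e (n - ρ - 1) ω)) b ∂μ) =
      Matrix.fromCols (W * Cj) (0 : Matrix (Fin r) (Fin t) ℝ) *
        transMat Abar (n - ρ) n * Bbar (n - ρ - 1) * Eiᵀ * Sei ∧
    (Matrix.of fun a b => ∫ ω,
        ((Matrix.fromCols (W * Cj) (0 : Matrix (Fin r) (Fin t) ℝ)).mulVec (x n ω)) a *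
          (Ei.mulVec (e (n - ρ - 1) ω)) b ∂μ) ≠ 0 :=
  stmt_0_general μ Abar Bbar x e ν hrec x0 hx0 hemean heL2 hνL2 hiid hindepν hindepx Se hSe Sei hSei
    Ei hblock W Cj n ρ hn hnz
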